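/- For every n ≥ 0, the number a_{n+2} of Dyck arches ending with a catastrophe of length n+2 equals binomial(n, ⌊n/2⌋) minus, when n is even, the Catalan number Catalan(n/2) (and minus 0 when n is odd). -/

import Mathlib

/-- Validity of a path with catastrophes over the jump set `J`, starting from
altitude `h`: each step is either a jump `s ∈ J` keeping the altitude
nonnegative, or a catastrophe `s = -h` from an altitude `h > 0` with `-h ∉ J`
(landing at altitude `0`). -/
def CatValidFrom (J : Finset ℤ) : ℤ → List ℤ → Prop
  | _, [] => True
  | h, s :: r =>
    ((s ∈ J ∧ 0 ≤ h + s) ∨ (s = -h ∧ 0 < h ∧ -h ∉ J)) ∧ CatValidFrom J (h + s) r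

/-- The jump set of Dyck paths. For this jump set a catastrophe is a jump
`-h` from an altitude `h ≥ 2` to altitude `0`. -/
def dyckJ : Finset ℤ := {-1, 1}

/-- `l` is a Dyck path with catastrophes of length `n`. -/
def DyckCat (n : ℕ) (l : List ℤ) : Prop :=
  l.length = n ∧ CatValidFrom dyckJ 0 l ∧ l.sum = 0

/-- The arch condition for a path of length `n`: the altitude after step `i`
is strictly positive for all `1 ≤ i < n`. -/
def IsArch (n : ℕ) (l : List ℤ) : Prop :=
  ∀ i : ℕ, 1 ≤ i → i < n → 0 < (l.take i).sum

/-- The last step of `l` (a path starting at altitude `0`) is a catastrophe. -/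
def EndsWithCat (J : Finset ℤ) (l : List ℤ) : Prop :=
  ∃ l' : List ℤ, l = l' ++ [-l'.sum] ∧ 0 < l'.sum ∧ -l'.sum ∉ J

/-- The number `a n` of Dyck arches ending with a catastrophe of length `n`. -/
noncomputable def aCount (n : ℕ) : ℕ :=
  Nat.card {l : List ℤ // DyckCat n l ∧ IsArch n l ∧ EndsWithCat dyckJ l}

/-!
An arch of length `n + 2` ending with a catastrophe must start with an up-step; its next `n` steps
form a meander (a `±1` path that never goes below `0`) lifted by one, and the final catastrophe
needs altitude at least `2`, i.e. the meander must end at a positive altitude. So `a (n + 2)` is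
the number of meanders of length `n` minus the number `E n` of those returning to `0`.

Classifying meanders by their last step gives Pascal-type recursions. For meanders ending at
altitude `2 j - n` they yield the ballot numbers `choose n j - choose n (j + 1)`, hence
`E (2 m) = catalan m` and `E (2 m + 1) = 0` (parity); for the total number `M n` they give
`M (n + 1) = 2 M n - E n`, whence `M n = choose n (n / 2)`.
-/

open Set

theorem List.finite_setOf_length_eq_forall_mem {α : Type*} (s : Set α) [Finite s] (n : ℕ) :
    {l : List α | l.length = n ∧ ∀ x ∈ l, x ∈ s}.Finite := by
  refine ((List.finite_length_eq s n).image (List.map Subtype.val)).subset ?_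
  rintro l ⟨rfl, hl⟩
  lift l to List s using hl
  exact ⟨l, by simp, rfl⟩

theorem catalan_add_choose_succ (m : ℕ) :
    catalan m + (2 * m).choose (m + 1) = (2 * m).choose m := by
  have h₁ : (m + 1) * catalan m = (2 * m).choose m := succ_mul_catalan_eq_centralBinom m
  have h₂ := Nat.choose_succ_right_eq (2 * m) m
  rw [show 2 * m - m = m by omega] at h₂
  refine Nat.eq_of_mul_eq_mul_left (by omega : 0 < m + 1) ?_
  linear_combination h₁ + h₂

theorem mem_dyckJ {x : ℤ} : x ∈ dyckJ ↔ x = -1 ∨ x = 1 := by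
  simp [dyckJ]

def IsMeander (m : List ℤ) : Prop :=
  (∀ x ∈ m, x ∈ dyckJ) ∧ ∀ i, 0 ≤ (m.take i).sum

noncomputable def meanderCount (n : ℕ) (p : ℤ → Prop) : ℕ :=
  {m : List ℤ | IsMeander m ∧ m.length = n ∧ p m.sum}.ncard

namespace IsMeander

theorem sum_nonneg {m : List ℤ} (hm : IsMeander m) : 0 ≤ m.sum := by
  simpa using hm.2 m.length

theorem even_sum_add_length {m : List ℤ} (hm : IsMeander m) : Even (m.sum + m.length) := by
  obtain ⟨hsteps, -⟩ := hm
  induction m with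
  | nil => simp
  | cons s m ih =>
    obtain ⟨k, hk⟩ := ih fun x hx => hsteps x (List.mem_cons_of_mem s hx)
    rcases mem_dyckJ.1 (hsteps s List.mem_cons_self) with rfl | rfl
    · exact ⟨k, by simp; omega⟩
    · exact ⟨k + 1, by simp; omega⟩

end IsMeander

theorem isMeander_nil : IsMeander [] := ⟨by simp, by simp⟩

theorem isMeander_append_singleton {m : List ℤ} {s : ℤ} :
    IsMeander (m ++ [s]) ↔ IsMeander m ∧ s ∈ dyckJ ∧ 0 ≤ m.sum + s := by
  constructor
  · rintro ⟨hsteps, hpre⟩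
    refine ⟨⟨fun x hx => hsteps x (by simp [hx]), fun i => ?_⟩, hsteps s (by simp), by
      simpa using hpre (m.length + 1)⟩
    rcases le_or_gt i m.length with hi | hi
    · simpa [List.take_append_of_le_length hi] using hpre i
    · simpa [List.take_of_length_le hi.le] using hpre m.length
  · rintro ⟨⟨hsteps, hpre⟩, hs, hsum⟩
    refine ⟨by simpa [or_imp, forall_and] using ⟨hsteps, hs⟩, fun i => ?_⟩
    rcases le_or_gt i m.length with hi | hi
    · simpa [List.take_append_of_le_length hi] using hpre i
    · simpa [List.take_of_length_le (show (m ++ [s]).length ≤ i by simpa)] using hsum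

theorem finite_setOf_isMeander (n : ℕ) (p : ℤ → Prop) :
    {m : List ℤ | IsMeander m ∧ m.length = n ∧ p m.sum}.Finite :=
  (List.finite_setOf_length_eq_forall_mem (dyckJ : Set ℤ) n).subset
    fun _ ⟨hm, hlen, _⟩ => ⟨hlen, hm.1⟩

theorem meanderCount_zero (p : ℤ → Prop) [DecidablePred p] :
    meanderCount 0 p = if p 0 then 1 else 0 := by
  have : {m : List ℤ | IsMeander m ∧ m.length = 0 ∧ p m.sum} = if p 0 then {[]} else ∅ := by
    ext (_ | ⟨a, m⟩) <;> split_ifs with h <;> simp [isMeander_nil, h]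
  rw [meanderCount, this]
  split_ifs <;> simp

theorem meanderCount_eq_zero {n : ℕ} {p : ℤ → Prop} (hp : ∀ k, p k → k < 0) :
    meanderCount n p = 0 := by
  rw [meanderCount, ncard_eq_zero (finite_setOf_isMeander n p)]
  exact eq_empty_of_forall_notMem fun m ⟨hm, _, hpm⟩ => (hp _ hpm).not_ge hm.sum_nonneg

theorem meanderCount_congr {n : ℕ} {p q : ℤ → Prop} (hpq : ∀ k, 0 ≤ k → (p k ↔ q k)) :
    meanderCount n p = meanderCount n q := by
  unfold meanderCount
  congr 1
  ext m
  exact ⟨fun ⟨hm, hlen, hp⟩ => ⟨hm, hlen, (hpq _ hm.sum_nonneg).1 hp⟩,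
    fun ⟨hm, hlen, hq⟩ => ⟨hm, hlen, (hpq _ hm.sum_nonneg).2 hq⟩⟩

theorem meanderCount_eq_add (n : ℕ) (p q : ℤ → Prop) :
    meanderCount n p =
      meanderCount n (fun k => p k ∧ q k) + meanderCount n (fun k => p k ∧ ¬ q k) := by
  have hdisj : Disjoint {m : List ℤ | IsMeander m ∧ m.length = n ∧ p m.sum ∧ q m.sum}
      {m | IsMeander m ∧ m.length = n ∧ p m.sum ∧ ¬ q m.sum} :=
    disjoint_left.2 fun m ⟨_, _, _, hq⟩ ⟨_, _, _, hnq⟩ => hnq hq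
  rw [meanderCount, meanderCount, meanderCount, ← ncard_union_eq hdisj
    (finite_setOf_isMeander n fun k => p k ∧ q k) (finite_setOf_isMeander n fun k => p k ∧ ¬ q k)]
  congr 1
  ext m
  simp only [mem_union, mem_ofPred_eq]
  tauto

theorem setOf_isMeander_succ (n : ℕ) (p : ℤ → Prop) :
    {m : List ℤ | IsMeander m ∧ m.length = n + 1 ∧ p m.sum} =
      (· ++ [1]) '' {m | IsMeander m ∧ m.length = n ∧ p (m.sum + 1)} ∪
      (· ++ [-1]) '' {m | IsMeander m ∧ m.length = n ∧ 1 ≤ m.sum ∧ p (m.sum - 1)} := by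
  ext l
  constructor
  · rintro ⟨hl, hlen, hp⟩
    obtain ⟨m, s, rfl⟩ := (List.eq_nil_or_concat' l).resolve_left (by rintro rfl; simp at hlen)
    obtain ⟨hm, hs, hsum⟩ := isMeander_append_singleton.1 hl
    simp only [List.length_append, List.length_singleton, Nat.add_right_cancel_iff,
      List.sum_append, List.sum_singleton] at hlen hp
    rcases mem_dyckJ.1 hs with rfl | rfl
    · exact Or.inr ⟨m, ⟨hm, hlen, by omega, hp⟩, rfl⟩
    · exact Or.inl ⟨m, ⟨hm, hlen, hp⟩, rfl⟩
  · rintro (⟨m, ⟨hm, hlen, hp⟩, rfl⟩ | ⟨m, ⟨hm, hlen, hsum, hp⟩, rfl⟩)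
    · have := hm.sum_nonneg
      exact ⟨isMeander_append_singleton.2 ⟨hm, mem_dyckJ.2 (Or.inr rfl), by omega⟩,
        by simp [hlen], by simpa using hp⟩
    · exact ⟨isMeander_append_singleton.2 ⟨hm, mem_dyckJ.2 (Or.inl rfl), by omega⟩,
        by simp [hlen], by simpa [← sub_eq_add_neg] using hp⟩

theorem meanderCount_succ (n : ℕ) (p : ℤ → Prop) :
    meanderCount (n + 1) p =
      meanderCount n (fun k => p (k + 1)) + meanderCount n (fun k => 1 ≤ k ∧ p (k - 1)) := by
  have hdisj : Disjoint ((· ++ [(1 : ℤ)]) '' {m | IsMeander m ∧ m.length = n ∧ p (m.sum + 1)})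
      ((· ++ [-1]) '' {m | IsMeander m ∧ m.length = n ∧ 1 ≤ m.sum ∧ p (m.sum - 1)}) := by
    refine disjoint_left.2 ?_
    rintro _ ⟨a, -, rfl⟩ ⟨b, -, h⟩
    simpa using congrArg List.getLast? h
  have hinj (s : ℤ) : Function.Injective (· ++ [s]) := List.append_left_injective [s]
  rw [meanderCount, setOf_isMeander_succ, ncard_union_eq hdisj
      ((finite_setOf_isMeander n fun k => p (k + 1)).image _)
      ((finite_setOf_isMeander n fun k => 1 ≤ k ∧ p (k - 1)).image _),
    ncard_image_of_injective _ (hinj 1), ncard_image_of_injective _ (hinj (-1))]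
  rfl

/-- The ballot numbers: `j` is the number of up-steps of a meander ending at altitude `2 j - n`. -/
theorem meanderCount_add_choose_succ {n j : ℕ} (h : n ≤ 2 * j + 1) :
    meanderCount n (· = 2 * j - n) + n.choose (j + 1) = n.choose j := by
  induction n generalizing j with
  | zero =>
    rw [meanderCount_zero]
    rcases j with _ | j
    · simp
    · simp; omega
  | succ n ih =>
    rcases Nat.lt_or_ge (2 * j) (n + 1) with hj | hj
    · obtain rfl : n = 2 * j := by omega
      rw [meanderCount_eq_zero (by push_cast; omega), zero_add, Nat.choose_symm_half]
    obtain ⟨i, rfl⟩ : ∃ i, j = i + 1 := ⟨j - 1, by omega⟩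
    have hdown := ih (j := i) (by omega)
    have hup := ih (j := i + 1) (by omega)
    have hshift : meanderCount n (fun k => k + 1 = 2 * ((i + 1 : ℕ) : ℤ) - ((n + 1 : ℕ) : ℤ)) =
        meanderCount n (· = 2 * (i : ℤ) - n) :=
      meanderCount_congr fun k _ => by push_cast; omega
    have hshift' :
        meanderCount n (fun k => 1 ≤ k ∧ k - 1 = 2 * ((i + 1 : ℕ) : ℤ) - ((n + 1 : ℕ) : ℤ)) =
          meanderCount n (· = 2 * ((i + 1 : ℕ) : ℤ) - n) :=
      meanderCount_congr fun k _ => by push_cast; omega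
    rw [meanderCount_succ, hshift, hshift', Nat.choose_succ_succ', Nat.choose_succ_succ']
    omega

theorem meanderCount_two_mul_zero_add_choose (m : ℕ) :
    meanderCount (2 * m) (· = 0) + (2 * m).choose (m + 1) = (2 * m).choose m := by
  have hballot := meanderCount_add_choose_succ (n := 2 * m) (j := m) (by omega)
  have hzero : meanderCount (2 * m) (· = 2 * (m : ℤ) - ((2 * m : ℕ) : ℤ)) =
      meanderCount (2 * m) (· = 0) :=
    meanderCount_congr fun k _ => by push_cast; omega
  rwa [hzero] at hballot

theorem meanderCount_two_mul_add_one_zero (m : ℕ) : meanderCount (2 * m + 1) (· = 0) = 0 := by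
  rw [meanderCount, ncard_eq_zero (finite_setOf_isMeander (2 * m + 1) (· = 0))]
  refine eq_empty_of_forall_notMem fun l ⟨hl, hlen, hsum⟩ => ?_
  obtain ⟨r, hr⟩ := hl.even_sum_add_length
  rw [hsum, hlen] at hr
  omega

theorem meanderCount_true_eq_add (n : ℕ) :
    meanderCount n (fun _ => True) = meanderCount n (· = 0) + meanderCount n (1 ≤ ·) := by
  rw [meanderCount_eq_add n _ (· = 0)]
  congr 1
  · exact meanderCount_congr fun k _ => by rw [true_and]
  · refine meanderCount_congr fun k hk => ?_
    rw [true_and]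
    omega

theorem meanderCount_true (n : ℕ) : meanderCount n (fun _ => True) = n.choose (n / 2) := by
  induction n with
  | zero => simp [meanderCount_zero]
  | succ n ih =>
    have hsucc : meanderCount (n + 1) (fun _ => True) =
        meanderCount n (fun _ => True) + meanderCount n (1 ≤ ·) := by
      rw [meanderCount_succ]
      congr 1
      exact meanderCount_congr fun k _ => by rw [and_true]
    have hsplit := meanderCount_true_eq_add n
    obtain ⟨m, rfl | rfl⟩ := Nat.even_or_odd' n
    · have hzero := meanderCount_two_mul_zero_add_choose m
      rw [show (2 * m + 1) / 2 = m by omega, ← Nat.choose_symm_half, Nat.choose_succ_succ']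
      rw [show 2 * m / 2 = m by omega] at ih
      omega
    · have hzero := meanderCount_two_mul_add_one_zero m
      rw [show (2 * m + 1 + 1) / 2 = m + 1 by omega, Nat.choose_succ_succ', Nat.choose_symm_half]
      rw [show (2 * m + 1) / 2 = m by omega] at ih
      omega

theorem meanderCount_one_le (n : ℕ) :
    (meanderCount n (1 ≤ ·) : ℤ) =
      n.choose (n / 2) - (if Even n then (catalan (n / 2) : ℤ) else 0) := by
  have hsplit := meanderCount_true_eq_add n
  rw [meanderCount_true] at hsplit
  obtain ⟨m, rfl | rfl⟩ := Nat.even_or_odd' n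
  · have hzero := meanderCount_two_mul_zero_add_choose m
    have hcat := catalan_add_choose_succ m
    rw [if_pos (even_two_mul m), show 2 * m / 2 = m by omega] at *
    omega
  · rw [if_neg (Nat.not_even_iff_odd.2 (odd_two_mul_add_one m)),
      meanderCount_two_mul_add_one_zero] at *
    omega

theorem catValidFrom_append (J : Finset ℤ) (l₁ l₂ : List ℤ) (h : ℤ) :
    CatValidFrom J h (l₁ ++ l₂) ↔ CatValidFrom J h l₁ ∧ CatValidFrom J (h + l₁.sum) l₂ := by
  induction l₁ generalizing h with
  | nil => simp [CatValidFrom]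
  | cons s r ih =>
    simp only [List.cons_append, CatValidFrom, List.sum_cons, ih (h + s), ← add_assoc, and_assoc]

theorem catValidFrom_singleton (J : Finset ℤ) (h s : ℤ) :
    CatValidFrom J h [s] ↔ (s ∈ J ∧ 0 ≤ h + s) ∨ (s = -h ∧ 0 < h ∧ -h ∉ J) := by
  simp [CatValidFrom]

theorem IsArch.mono {m n : ℕ} {l : List ℤ} (hnm : n ≤ m) (hl : IsArch m l) : IsArch n l :=
  fun i hi hin => hl i hi (hin.trans_le hnm)

theorem isArch_append_iff_of_le {n : ℕ} {l r : List ℤ} (hn : n ≤ l.length + 1) :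
    IsArch n (l ++ r) ↔ IsArch n l :=
  forall_congr' fun i => imp_congr_right fun _ => forall_congr' fun hi => by
    rw [List.take_append_of_le_length (by omega)]

/-- A catastrophe lands at altitude `0`, so a path that stays strictly positive has none. -/
theorem catValidFrom_zero_iff_of_isArch {J : Finset ℤ} {l : List ℤ}
    (hl : IsArch (l.length + 1) l) : CatValidFrom J 0 l ↔ ∀ x ∈ l, x ∈ J := by
  induction l using List.reverseRecOn with
  | nil => simp [CatValidFrom]
  | append_singleton l s ih =>
    have hpos : 0 < l.sum + s := by simpa using hl (l.length + 1) (by omega) (by simp)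
    have hl' : IsArch (l.length + 1) l := (isArch_append_iff_of_le le_rfl).1 (hl.mono (by simp))
    rw [catValidFrom_append, ih hl', catValidFrom_singleton, zero_add, List.forall_mem_append,
      List.forall_mem_singleton]
    constructor
    · rintro ⟨hl, ⟨hs, -⟩ | ⟨rfl, -⟩⟩
      · exact ⟨hl, hs⟩
      · omega
    · exact fun ⟨hl, hs⟩ => ⟨hl, Or.inl ⟨hs, hpos.le⟩⟩

theorem setOf_dyckArch_eq_image (n : ℕ) :
    {l | DyckCat (n + 1) l ∧ IsArch (n + 1) l ∧ EndsWithCat dyckJ l} =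
      (fun l => l ++ [-l.sum]) ''
        {l | l.length = n ∧ IsArch (n + 1) l ∧ (∀ x ∈ l, x ∈ dyckJ) ∧ 2 ≤ l.sum} := by
  ext l
  constructor
  · rintro ⟨⟨hlen, hvalid, -⟩, harch, l, rfl, hpos, hcat⟩
    obtain rfl : l.length = n := by simpa using hlen
    have harch' : IsArch (l.length + 1) l := (isArch_append_iff_of_le le_rfl).1 harch
    have hsteps :=
      (catValidFrom_zero_iff_of_isArch harch').1 ((catValidFrom_append _ _ _ _).1 hvalid).1
    rw [mem_dyckJ] at hcat
    exact ⟨l, ⟨rfl, harch', hsteps, by omega⟩, rfl⟩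
  · rintro ⟨l, ⟨rfl, harch, hsteps, hsum⟩, rfl⟩
    have hcat : -l.sum ∉ dyckJ := by rw [mem_dyckJ]; omega
    have hlast : CatValidFrom dyckJ (0 + l.sum) [-l.sum] := by
      rw [catValidFrom_singleton, zero_add]
      exact Or.inr ⟨rfl, by omega, hcat⟩
    exact ⟨⟨by simp, (catValidFrom_append _ _ _ _).2
        ⟨(catValidFrom_zero_iff_of_isArch harch).2 hsteps, hlast⟩, by simp⟩,
      (isArch_append_iff_of_le le_rfl).2 harch, l, rfl, by omega, hcat⟩

theorem isArch_cons_one_iff {m : List ℤ} :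
    IsArch (m.length + 2) (1 :: m) ↔ ∀ i, 0 ≤ (m.take i).sum := by
  constructor
  · intro h i
    rcases le_or_gt i m.length with hi | hi
    · simpa [Int.lt_iff_add_one_le, add_comm] using h (i + 1) (by omega) (by omega)
    · rw [List.take_of_length_le hi.le]
      simpa [Int.lt_iff_add_one_le, add_comm] using h (m.length + 1) (by omega) (by omega)
  · rintro h (_ | i) hi -
    · omega
    · simpa [Int.lt_iff_add_one_le, add_comm] using h i

theorem setOf_positivePath_eq_image (n : ℕ) :
    {l | l.length = n + 1 ∧ IsArch (n + 1 + 1) l ∧ (∀ x ∈ l, x ∈ dyckJ) ∧ 2 ≤ l.sum} =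
      List.cons 1 '' {m | IsMeander m ∧ m.length = n ∧ 1 ≤ m.sum} := by
  ext l
  constructor
  · rintro ⟨hlen, harch, hsteps, hsum⟩
    obtain ⟨a, m, rfl⟩ := List.exists_cons_of_length_eq_add_one hlen
    obtain rfl : m.length = n := by simpa using hlen
    obtain rfl : a = 1 := by
      have := harch 1 le_rfl (by omega)
      rcases mem_dyckJ.1 (hsteps a List.mem_cons_self) with rfl | rfl
      · simp at this
      · rfl
    refine ⟨m, ⟨⟨fun x hx => hsteps x (List.mem_cons_of_mem 1 hx), isArch_cons_one_iff.1 harch⟩,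
      rfl, by simp at hsum; omega⟩, rfl⟩
  · rintro ⟨m, ⟨⟨hsteps, hpre⟩, rfl, hsum⟩, rfl⟩
    refine ⟨rfl, isArch_cons_one_iff.2 hpre, ?_, by simp; omega⟩
    exact List.forall_mem_cons.2 ⟨mem_dyckJ.2 (Or.inr rfl), hsteps⟩

theorem aCount_add_two (n : ℕ) : aCount (n + 2) = meanderCount n (1 ≤ ·) := by
  have hinj : Function.Injective fun l : List ℤ => l ++ [-l.sum] := fun a b h => by
    simpa using congrArg List.dropLast h
  change Set.ncard {l | DyckCat (n + 1 + 1) l ∧ IsArch (n + 1 + 1) l ∧ EndsWithCat dyckJ l} = _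
  rw [setOf_dyckArch_eq_image, ncard_image_of_injective _ hinj, setOf_positivePath_eq_image,
    ncard_image_of_injective _ List.cons_injective]
  rfl

/-- **Dyck arches ending with a catastrophe, via meanders minus excursions.**
For every `n ≥ 0`, `a (n+2) = binomial n ⌊n/2⌋ - [n even] · Catalan (n/2)`. -/
theorem aCount_succ_succ (n : ℕ) :
    (aCount (n + 2) : ℤ) =
      n.choose (n / 2) - (if Even n then (catalan (n / 2) : ℤ) else 0) := by
  rw [aCount_add_two, meanderCount_one_le]
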